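/- Any set of mutually anticommuting Hermitian Pauli operators on Δ qubits (each squaring to identity, none proportional to identity) has size at most 2Δ + 1; consequently, given a fermionic encoding with disparity Δ ≥ 1, the number of simultaneously definable distinct particle species is at most 2Δ + 2. -/

import Mathlib

/-- The four single-qubit Pauli matrices I, X, Y, Z. -/
def pauliMat : Fin 4 → Matrix (Fin 2) (Fin 2) ℂ
  | 0 => 1
  | 1 => !![0, 1; 1, 0]
  | 2 => !![0, -Complex.I; Complex.I, 0]
  | 3 => !![1, 0; 0, -1]

/-- The Δ-qubit Pauli operator (tensor product of single-qubit Paulis) labelled by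
p : Fin Δ → Fin 4. -/
noncomputable def pauliOp (Δ : ℕ) (p : Fin Δ → Fin 4) :
    Matrix (Fin Δ → Fin 2) (Fin Δ → Fin 2) ℂ :=
  Matrix.of fun i j => ∏ k, pauliMat (p k) (i k) (j k)

/-!
Label a Pauli operator by its X- and Z-parts, a vector in `(ZMod 2 × ZMod 2)^Δ`. Two Pauli
operators commute or anticommute according as the symplectic form of their labels is `0` or
`1`, so the labels of a pairwise anticommuting family have Gram matrix `J - I`. Pairing a relation
`∑ gᵢ vᵢ = 0` with `v_j` gives `g_j = ∑ᵢ gᵢ` for every `j`, so all coefficients agree and a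
relation with one vanishing coefficient is trivial. Hence any `m - 1` of the labels are
independent and `m - 1 ≤ 2Δ`; the species bound is this applied to the `m - 1` fused species.
-/

open Module

section KroneckerPi

variable {ι n R : Type*} [Fintype ι] [CommSemiring R]

def kroneckerPi (M : ι → Matrix n n R) : Matrix (ι → n) (ι → n) R :=
  Matrix.of fun i j => ∏ k, M k (i k) (j k)

theorem kroneckerPi_mul [Fintype n] [DecidableEq ι] (M N : ι → Matrix n n R) :
    kroneckerPi M * kroneckerPi N = kroneckerPi (M * N) := by
  ext i j
  simp only [kroneckerPi, Matrix.mul_apply, Matrix.of_apply, Pi.mul_apply,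
    ← Finset.prod_mul_distrib]
  rw [Finset.prod_univ_sum, Fintype.piFinset_univ]

theorem kroneckerPi_smul (c : ι → R) (M : ι → Matrix n n R) :
    kroneckerPi (fun k => c k • M k) = (∏ k, c k) • kroneckerPi M := by
  ext i j
  simp [kroneckerPi, Finset.prod_mul_distrib]

theorem kroneckerPi_one [DecidableEq n] :
    kroneckerPi (fun _ : ι => (1 : Matrix n n R)) = 1 := by
  ext i j
  by_cases h : i = j
  · subst h
    simp [kroneckerPi]
  · obtain ⟨k, hk⟩ := Function.ne_iff.mp h
    simp only [kroneckerPi, Matrix.of_apply, Matrix.one_apply, h, if_false]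
    exact Finset.prod_eq_zero (Finset.mem_univ k) (if_neg hk)

end KroneckerPi

theorem neg_one_pow_val_sum {ι R : Type*} [CommRing R] (s : Finset ι) (x : ι → ZMod 2) :
    (-1 : R) ^ (∑ i ∈ s, x i).val = ∏ i ∈ s, (-1 : R) ^ (x i).val := by
  classical
  induction s using Finset.induction_on with
  | empty => simp
  | insert i s hi ih =>
    rw [Finset.sum_insert hi, Finset.prod_insert hi, ZMod.val_add, ← neg_one_pow_eq_pow_mod_two,
      pow_add, ih]

section GramMatrix

variable {K V ι : Type*} [CommRing K] [AddCommGroup V] [Module K V]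
  {B : LinearMap.BilinForm K V}

theorem coeff_eq_sum_of_sum_smul_eq_zero [Fintype ι] {v : ι → V}
    (hself : ∀ i, B (v i) (v i) = 0) (hne : ∀ i j, i ≠ j → B (v i) (v j) = 1) {g : ι → K}
    (hg : ∑ i, g i • v i = 0) (j : ι) : g j = ∑ i, g i := by
  classical
  have hterm : ∀ i, g i * B (v i) (v j) = g i - if i = j then g i else 0 := by
    intro i
    split_ifs with h
    · subst h
      simp [hself]
    · simp [hne i j h]
  have hpair := congrArg (fun x => B x (v j)) hg
  simp only [map_sum, map_smul, LinearMap.coe_sum, LinearMap.coe_smul, Finset.sum_apply,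
    Pi.smul_apply, smul_eq_mul, hterm, Finset.sum_sub_distrib, Finset.sum_ite_eq',
    Finset.mem_univ, if_true, map_zero, LinearMap.zero_apply] at hpair
  exact (sub_eq_zero.mp hpair).symm

theorem le_finrank_of_pairwise_eq_one [StrongRankCondition K] [Module.Finite K V] {n : ℕ}
    {v : Fin (n + 1) → V} (hself : ∀ i, B (v i) (v i) = 0)
    (hne : ∀ i j, i ≠ j → B (v i) (v j) = 1) : n ≤ finrank K V := by
  have hli : LinearIndependent K fun i : Fin n => v i.castSucc := by
    rw [Fintype.linearIndependent_iff]
    intro g hg i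
    have hg' : ∑ i, (Fin.snoc g 0 : Fin (n + 1) → K) i • v i = 0 := by
      simpa [Fin.sum_univ_castSucc] using hg
    have := (coeff_eq_sum_of_sum_smul_eq_zero hself hne hg' i.castSucc).trans
      (coeff_eq_sum_of_sum_smul_eq_zero hself hne hg' (Fin.last n)).symm
    simpa using this
  simpa using hli.fintype_card_le_finrank

end GramMatrix

/-- `pauliMat a` is `X ^ x * Z ^ z` up to a phase, where `pauliVec a = (x, z)`. -/
def pauliVec : Fin 4 → ZMod 2 × ZMod 2
  | 0 => (0, 0)
  | 1 => (1, 0)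
  | 2 => (1, 1)
  | 3 => (0, 1)

def qubitSymplecticForm : LinearMap.BilinForm (ZMod 2) (ZMod 2 × ZMod 2) :=
  LinearMap.mk₂ (ZMod 2) (fun u w => u.1 * w.2 + u.2 * w.1)
    (by intros; simp only [Prod.fst_add, Prod.snd_add]; ring)
    (by intros; simp only [Prod.smul_fst, Prod.smul_snd, smul_eq_mul]; ring)
    (by intros; simp only [Prod.fst_add, Prod.snd_add]; ring)
    (by intros; simp only [Prod.smul_fst, Prod.smul_snd, smul_eq_mul]; ring)

def symplecticForm (ι : Type*) [Fintype ι] :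
    LinearMap.BilinForm (ZMod 2) (ι → ZMod 2 × ZMod 2) :=
  ∑ k, qubitSymplecticForm.compl₁₂ (LinearMap.proj k) (LinearMap.proj k)

theorem symplecticForm_apply {ι : Type*} [Fintype ι] (u w : ι → ZMod 2 × ZMod 2) :
    symplecticForm ι u w = ∑ k, qubitSymplecticForm (u k) (w k) := by
  simp [symplecticForm]

theorem symplecticForm_self {ι : Type*} [Fintype ι] (u : ι → ZMod 2 × ZMod 2) :
    symplecticForm ι u u = 0 := by
  simp [symplecticForm_apply, qubitSymplecticForm, mul_comm, CharTwo.add_self_eq_zero]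

theorem pauliMat_mul_self (a : Fin 4) : pauliMat a * pauliMat a = 1 := by
  fin_cases a <;> ext i j <;> fin_cases i <;> fin_cases j <;>
    simp [pauliMat, Matrix.mul_apply, Fin.sum_univ_two]

theorem pauliMat_mul_comm (a b : Fin 4) :
    pauliMat a * pauliMat b =
      (-1 : ℂ) ^ (qubitSymplecticForm (pauliVec a) (pauliVec b)).val •
        (pauliMat b * pauliMat a) := by
  fin_cases a <;> fin_cases b <;> ext i j <;> fin_cases i <;> fin_cases j <;>
    simp [pauliMat, pauliVec, qubitSymplecticForm, Matrix.mul_apply, Fin.sum_univ_two,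
      ZMod.val_one, show (1 + 1 : ZMod 2) = 0 from rfl]

theorem pauliOp_eq_kroneckerPi (Δ : ℕ) (p : Fin Δ → Fin 4) :
    pauliOp Δ p = kroneckerPi fun k => pauliMat (p k) := rfl

theorem pauliOp_mul_self (Δ : ℕ) (p : Fin Δ → Fin 4) : pauliOp Δ p * pauliOp Δ p = 1 := by
  simp only [pauliOp_eq_kroneckerPi, kroneckerPi_mul]
  convert kroneckerPi_one (ι := Fin Δ) with k
  exact pauliMat_mul_self (p k)

theorem pauliOp_mul_comm (Δ : ℕ) (p q : Fin Δ → Fin 4) :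
    pauliOp Δ p * pauliOp Δ q =
      (-1 : ℂ) ^ (symplecticForm (Fin Δ) (pauliVec ∘ p) (pauliVec ∘ q)).val •
        (pauliOp Δ q * pauliOp Δ p) := by
  simp only [pauliOp_eq_kroneckerPi, kroneckerPi_mul, symplecticForm_apply, neg_one_pow_val_sum,
    ← kroneckerPi_smul]
  congr 1
  funext k
  exact pauliMat_mul_comm (p k) (q k)

theorem symplecticForm_eq_one_of_anticomm {Δ : ℕ} {p q : Fin Δ → Fin 4}
    (h : pauliOp Δ p * pauliOp Δ q = -(pauliOp Δ q * pauliOp Δ p)) :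
    symplecticForm (Fin Δ) (pauliVec ∘ p) (pauliVec ∘ q) = 1 := by
  rw [pauliOp_mul_comm] at h
  generalize symplecticForm (Fin Δ) (pauliVec ∘ p) (pauliVec ∘ q) = s at h
  obtain rfl | rfl := (by decide : ∀ s : ZMod 2, s = 0 ∨ s = 1) s
  · rw [ZMod.val_zero, pow_zero, one_smul] at h
    have h1 : (1 : Matrix (Fin Δ → Fin 2) (Fin Δ → Fin 2) ℂ) = -1 := by
      simpa [mul_assoc, ← mul_assoc (pauliOp Δ p), pauliOp_mul_self] using
        congrArg (· * (pauliOp Δ p * pauliOp Δ q)) h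
    have := congrFun (congrFun h1 0) 0
    norm_num at this
  · rfl

theorem card_le_of_pairwise_anticomm {Δ m : ℕ} (A : Fin m → Fin Δ → Fin 4)
    (hA : ∀ i j, i ≠ j →
      pauliOp Δ (A i) * pauliOp Δ (A j) = -(pauliOp Δ (A j) * pauliOp Δ (A i))) :
    m ≤ 2 * Δ + 1 := by
  cases m with
  | zero => omega
  | succ n =>
    have hn := le_finrank_of_pairwise_eq_one (B := symplecticForm (Fin Δ))
      (v := fun i => pauliVec ∘ A i) (fun i => symplecticForm_self _)
      (fun i j hij => symplecticForm_eq_one_of_anticomm (hA i j hij))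
    have hrank : finrank (ZMod 2) (Fin Δ → ZMod 2 × ZMod 2) = 2 * Δ := by
      simp [Module.finrank_pi_fintype, Module.finrank_prod]
      ring
    omega

theorem species_bound_general (Δ : ℕ) :
    (∀ (m : ℕ) (A : Fin m → (Fin Δ → Fin 4)),
        (∀ i, pauliOp Δ (A i) ≠ 1) →
        (Function.Injective fun i => pauliOp Δ (A i)) →
        (∀ i j, i ≠ j →
          pauliOp Δ (A i) * pauliOp Δ (A j) = -(pauliOp Δ (A j) * pauliOp Δ (A i))) →
        m ≤ 2 * Δ + 1) ∧
    (∀ m : ℕ, 1 ≤ m →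
      (∃ P : Fin (m - 1) → (Fin Δ → Fin 4),
        (∀ i, pauliOp Δ (P i) ≠ 1) ∧
        (Function.Injective fun i => pauliOp Δ (P i)) ∧
        ∀ i j, i ≠ j →
          pauliOp Δ (P i) * pauliOp Δ (P j) = -(pauliOp Δ (P j) * pauliOp Δ (P i))) →
      m ≤ 2 * Δ + 2) := by
  refine ⟨fun m A _ _ hA => card_le_of_pairwise_anticomm A hA, ?_⟩
  rintro m - ⟨P, -, -, hP⟩
  have := card_le_of_pairwise_anticomm P hP
  omega

/-- Any set of mutually anticommuting Hermitian Pauli operators on Δ qubits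
(each squaring to the identity, none proportional to the identity) has size at most
2Δ + 1.  Consequently, for a fermionic encoding with disparity Δ ≥ 1, the number m of
simultaneously definable distinct particle species is at most 2Δ + 2: fusing each of the
other m - 1 species with a fixed reference species yields m - 1 mutually anticommuting
Pauli operators acting only on the excess Δ-qubit space. -/
theorem species_bound (Δ : ℕ) (hΔ : 1 ≤ Δ) :
    (∀ (m : ℕ) (A : Fin m → (Fin Δ → Fin 4)),
        (∀ i, pauliOp Δ (A i) ≠ 1) →
        (Function.Injective fun i => pauliOp Δ (A i)) →
        (∀ i j, i ≠ j →
          pauliOp Δ (A i) * pauliOp Δ (A j) = -(pauliOp Δ (A j) * pauliOp Δ (A i))) →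
        m ≤ 2 * Δ + 1) ∧
    (∀ m : ℕ, 1 ≤ m →
      (∃ P : Fin (m - 1) → (Fin Δ → Fin 4),
        (∀ i, pauliOp Δ (P i) ≠ 1) ∧
        (Function.Injective fun i => pauliOp Δ (P i)) ∧
        ∀ i j, i ≠ j →
          pauliOp Δ (P i) * pauliOp Δ (P j) = -(pauliOp Δ (P j) * pauliOp Δ (P i))) →
      m ≤ 2 * Δ + 2) :=
  species_bound_general Δ
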